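/- Let φ be a 3-CNF formula with clauses c_1,…,c_m over variables x_1,…,x_n, and let G_φ be the data-graph with nodes {x_1,…,x_n, c_1,…,c_m, ⊥-node, ⊤-node}, data values D(x_i) = var, D(c_j) = clause, D(⊥-node) = ⊥, D(⊤-node) = ⊤, an edge labeled '+' from x_i to c_j iff x_i occurs positively in c_j, an edge labeled '−' from x_i to c_j iff x_i occurs negatively in c_j, and a loop labeled 'notClause' on every variable node. For a truth assignment f, let G_{φ,f} extend G_φ with an edge labeled 'assigned' from x_i to the ⊤-node iff f(x_i) = true and to the ⊥-node iff f(x_i) = false. Then f satisfies φ if and only if every node of G_{φ,f} satisfies the positive regular-XPath node expression ν = ⟨(+)⁻ · assigned · [=⊤]⟩ ∨ ⟨(−)⁻ · assigned · [=⊥]⟩ ∨ [≠clause]. -/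
import Mathlib


/-- A data-graph: a set of nodes (natural numbers), a set of labeled directed edges,
and a data function assigning a data value to each node. -/
structure DataGraph (σe σn : Type) where
  V : Set ℕ
  E : Set (ℕ × σe × ℕ)
  D : ℕ → σn

/- Syntax of the positive fragment of regular XPath (GXPath-pos): path expressions and
node expressions, without path complement or node negation. -/
mutual
inductive PathExpr (σe σn : Type) where
  | eps : PathExpr σe σn
  | label : σe → PathExpr σe σn
  | inv : σe → PathExpr σe σn
  | test : NodeExpr σe σn → PathExpr σe σn
  | concat : PathExpr σe σn → PathExpr σe σn → PathExpr σe σn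
  | union : PathExpr σe σn → PathExpr σe σn → PathExpr σe σn
  | inter : PathExpr σe σn → PathExpr σe σn → PathExpr σe σn
  | star : PathExpr σe σn → PathExpr σe σn

inductive NodeExpr (σe σn : Type) where
  | eq : σn → NodeExpr σe σn
  | ne : σn → NodeExpr σe σn
  | and : NodeExpr σe σn → NodeExpr σe σn → NodeExpr σe σn
  | or : NodeExpr σe σn → NodeExpr σe σn → NodeExpr σe σn
  | ex : PathExpr σe σn → NodeExpr σe σn
  | exEq : PathExpr σe σn → PathExpr σe σn → NodeExpr σe σn
  | exNe : PathExpr σe σn → PathExpr σe σn → NodeExpr σe σn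
end

/- Semantics of GXPath-pos over a data-graph. -/
mutual
def pathSem {σe σn : Type} (G : DataGraph σe σn) : PathExpr σe σn → ℕ → ℕ → Prop
  | .eps, v, w => v = w ∧ v ∈ G.V
  | .label a, v, w => (v, a, w) ∈ G.E
  | .inv a, v, w => (w, a, v) ∈ G.E
  | .test ν, v, w => v = w ∧ nodeSem G ν v
  | .concat α β, v, w => ∃ u, pathSem G α v u ∧ pathSem G β u w
  | .union α β, v, w => pathSem G α v w ∨ pathSem G β v w
  | .inter α β, v, w => pathSem G α v w ∧ pathSem G β v w
  | .star α, v, w => v ∈ G.V ∧ w ∈ G.V ∧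
      Relation.ReflTransGen (fun x y => pathSem G α x y) v w

def nodeSem {σe σn : Type} (G : DataGraph σe σn) : NodeExpr σe σn → ℕ → Prop
  | .eq c, v => v ∈ G.V ∧ G.D v = c
  | .ne c, v => v ∈ G.V ∧ G.D v ≠ c
  | .and ν ν', v => nodeSem G ν v ∧ nodeSem G ν' v
  | .or ν ν', v => nodeSem G ν v ∨ nodeSem G ν' v
  | .ex α, v => ∃ w, pathSem G α v w
  | .exEq α β, v => ∃ w u, pathSem G α v w ∧ pathSem G β v u ∧ G.D w = G.D u
  | .exNe α β, v => ∃ w u, pathSem G α v w ∧ pathSem G β v u ∧ G.D w ≠ G.D u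
end

/-- Edge labels for the 3-CNF encoding. -/
inductive EL where
  | plus | minus | assigned | notClause
deriving DecidableEq

/-- Data values for the 3-CNF encoding. -/
inductive DV where
  | var | clause | bot | top
deriving DecidableEq

/-- The data-graph `G_{φ,f}` encoding a CNF formula `φ` (clauses given as finite sets of
literals `(i, b)`, with `b = true` for a positive occurrence of variable `i`) together with a
truth assignment `f`.  Variable `i` is node `i`, clause `j` is node `n + j`, the `⊥`-node is
`n + m` and the `⊤`-node is `n + m + 1`. -/
def Gphi (n m : ℕ) (φ : Fin m → Finset (Fin n × Bool)) (f : Fin n → Bool) :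
    DataGraph EL DV where
  V := {k | k < n + m + 2}
  E := {e | (∃ (i : Fin n) (j : Fin m), (i, true) ∈ φ j ∧ e = (i.val, EL.plus, n + j.val)) ∨
            (∃ (i : Fin n) (j : Fin m), (i, false) ∈ φ j ∧ e = (i.val, EL.minus, n + j.val)) ∨
            (∃ i : Fin n, e = (i.val, EL.notClause, i.val)) ∨
            (∃ i : Fin n, f i = true ∧ e = (i.val, EL.assigned, n + m + 1)) ∨
            (∃ i : Fin n, f i = false ∧ e = (i.val, EL.assigned, n + m))}
  D := fun k => if k < n then DV.var else if k < n + m then DV.clause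
    else if k = n + m then DV.bot else DV.top

/-- The node expression
`ν = ⟨(+)⁻ · assigned · [=⊤]⟩ ∨ ⟨(−)⁻ · assigned · [=⊥]⟩ ∨ [≠clause]`. -/
def nu14 : NodeExpr EL DV :=
  .or (.or
    (.ex (.concat (.inv EL.plus) (.concat (.label EL.assigned) (.test (.eq DV.top)))))
    (.ex (.concat (.inv EL.minus) (.concat (.label EL.assigned) (.test (.eq DV.bot))))))
    (.ne DV.clause)

/-- an assignment `f` satisfies the CNF formula `φ` if and only if every node of
the data-graph `G_{φ,f}` satisfies the positive regular-XPath node expression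
`⟨(+)⁻·assigned·[=⊤]⟩ ∨ ⟨(−)⁻·assigned·[=⊥]⟩ ∨ [≠clause]`. -/
theorem stmt_14 (n m : ℕ) (φ : Fin m → Finset (Fin n × Bool)) (f : Fin n → Bool) :
    (∀ j : Fin m, ∃ l ∈ φ j, f l.1 = l.2) ↔
      ∀ v ∈ (Gphi n m φ f).V, nodeSem (Gphi n m φ f) nu14 v := by

  constructor
  · intro hsat v hv
    simp only [Gphi, Set.mem_setOf_eq] at hv
    by_cases hc : n ≤ v ∧ v < n + m
    · obtain ⟨h1, h2⟩ := hc
      have hj : v - n < m := by omega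
      obtain ⟨⟨i, b⟩, hl, hf⟩ := hsat ⟨v - n, hj⟩
      have hveq : v = n + (⟨v - n, hj⟩ : Fin m).val := by simp; omega
      cases b with
      | true =>
        refine Or.inl (Or.inl ⟨n + m + 1, i.val, ?_, n + m + 1, ?_, rfl, ?_⟩)
        · simp only [Gphi, Set.mem_setOf_eq]
          exact Or.inl ⟨i, ⟨v - n, hj⟩, hl, by rw [← hveq]⟩
        · simp only [Gphi, Set.mem_setOf_eq]
          exact Or.inr (Or.inr (Or.inr (Or.inl ⟨i, hf, rfl⟩)))
        · constructor
          · simp only [Gphi, Set.mem_setOf_eq]; omega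
          · simp only [Gphi]
            rw [if_neg (by omega), if_neg (by omega), if_neg (by omega)]
      | false =>
        refine Or.inl (Or.inr ⟨n + m, i.val, ?_, n + m, ?_, rfl, ?_⟩)
        · simp only [Gphi, Set.mem_setOf_eq]
          exact Or.inr (Or.inl ⟨i, ⟨v - n, hj⟩, hl, by rw [← hveq]⟩)
        · simp only [Gphi, Set.mem_setOf_eq]
          exact Or.inr (Or.inr (Or.inr (Or.inr ⟨i, hf, rfl⟩)))
        · constructor
          · simp only [Gphi, Set.mem_setOf_eq]; omega
          · simp only [Gphi]
            rw [if_neg (by omega), if_neg (by omega)]; simp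
    · refine Or.inr ⟨?_, ?_⟩
      · simp only [Gphi, Set.mem_setOf_eq]; omega
      · simp only [Gphi]
        by_cases h1 : v < n
        · rw [if_pos h1]; simp
        · rw [if_neg h1, if_neg (by omega)]
          by_cases h2 : v = n + m
          · rw [if_pos h2]; simp
          · rw [if_neg h2]; simp
  · intro h j
    have hv : n + j.val ∈ (Gphi n m φ f).V := by
      simp only [Gphi, Set.mem_setOf_eq]; omega
    have hnu := h (n + j.val) hv
    have hclause : (Gphi n m φ f).D (n + j.val) = DV.clause := by
      simp only [Gphi]
      rw [if_neg (by omega), if_pos (by omega)]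
    rcases hnu with (⟨w, u, hplus, u', hass, hw, _, hdw⟩ | ⟨w, u, hminus, u', hass, hw, _, hdw⟩) | ⟨_, hne⟩
    · subst hw
      have hbot : (Gphi n m φ f).D (n + m) = DV.bot := by
        simp only [Gphi]; rw [if_neg (by omega), if_neg (by omega)]; simp
      simp only [pathSem, Gphi, Set.mem_setOf_eq, Prod.mk.injEq, reduceCtorEq,
        true_and, and_true, false_and, and_false, exists_false, or_false, false_or] at hplus hass
      obtain ⟨i, j1, hmem, hu, hj1⟩ := hplus
      have hj : j1 = j := by
        ext; omega
      subst hj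
      rcases hass with ⟨i', hfi, hu', hw'⟩ | ⟨i', hfi, hu', hw'⟩
      · have : i' = i := Fin.val_injective (by omega)
        subst this
        exact ⟨(i', true), hmem, hfi⟩
      · subst hw'
        rw [hbot] at hdw
        exact absurd hdw (by simp)
    · subst hw
      have htop : (Gphi n m φ f).D (n + m + 1) = DV.top := by
        simp only [Gphi]; rw [if_neg (by omega), if_neg (by omega), if_neg (by omega)]
      simp only [pathSem, Gphi, Set.mem_setOf_eq, Prod.mk.injEq, reduceCtorEq,
        true_and, and_true, false_and, and_false, exists_false, or_false, false_or] at hminus hass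
      obtain ⟨i, j1, hmem, hu, hj1⟩ := hminus
      have hj : j1 = j := by
        ext; omega
      subst hj
      rcases hass with ⟨i', hfi, hu', hw'⟩ | ⟨i', hfi, hu', hw'⟩
      · subst hw'
        rw [htop] at hdw
        exact absurd hdw (by simp)
      · have : i' = i := Fin.val_injective (by omega)
        subst this
        exact ⟨(i', false), hmem, hfi⟩
    · exact absurd hclause hne
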